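/- Let x ∈ ℝ^{1×n} be a row vector (batch size 1), and suppose the gradient of a loss ℓ with respect to the bias b ∈ ℝ^{1×m} of a fully connected layer y = xWᵀ + b is g = ∂ℓ/∂b ∈ ℝ^{1×m} with g ≠ 0, and the gradient with respect to the weight W ∈ ℝ^{m×n} satisfies (∂ℓ/∂W)ᵀ = xᵀ g. Then x can be exactly recovered as xᵀ = (∂ℓ/∂W)ᵀ gᵀ (g gᵀ)⁻¹. -/
import Mathlib


open Matrix

theorem extraction_attack_batch_one {n m : ℕ}
    (x : Matrix (Fin 1) (Fin n) ℝ) (g : Matrix (Fin 1) (Fin m) ℝ)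
    (dW : Matrix (Fin m) (Fin n) ℝ)
    (hg : g ≠ 0) (hdW : dWᵀ = xᵀ * g) :
    xᵀ = dWᵀ * gᵀ * (g * gᵀ)⁻¹ := by
  have hdet : (g * gᵀ).det ≠ 0 := by
    have h1 : (g * gᵀ).det = ∑ j, g 0 j * g 0 j := by
      simp [Matrix.det_fin_one, Matrix.mul_apply, Matrix.transpose_apply,
        Fin.fin_one_eq_zero]
    rw [h1]
    have : ∃ j, g 0 j ≠ 0 := by
      by_contra h
      push_neg at h
      apply hg
      ext i j
      rw [Subsingleton.elim i 0]; exact h j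
    obtain ⟨j, hj⟩ := this
    have : 0 < ∑ j, g 0 j * g 0 j :=
      Finset.sum_pos' (fun i _ => mul_self_nonneg _)
        ⟨j, Finset.mem_univ j, mul_pos_iff.mpr (Or.imp (fun h => ⟨h,h⟩) (fun h => ⟨h,h⟩) (hj.lt_or_gt.symm))⟩
    linarith
  rw [hdW, Matrix.mul_assoc, Matrix.mul_assoc, ← Matrix.mul_assoc g,
    Matrix.mul_nonsing_inv _ (isUnit_iff_ne_zero.mpr hdet), Matrix.mul_one]
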